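/- Let μ be the bracket on ℝ⁶ given by μ(e₁,e₂) = −e₃ + √3·e₄, μ(e₁,e₄) = 2e₅, μ(e₂,e₄) = e₆, μ(e₂,e₃) = −√3·e₆, and for a,b ∈ ℝ set D(a,b) = diag(a,b,a+b,a+b,2a+b,a+2b). Then D(a,b) is a symmetric derivation of μ for all a,b, and the linear map A given in block form by A = diag([[0,1],[1,0]], [[1/2, √3/2],[√3/2, −1/2]], [[0,−1],[−1,0]]) is an orthogonal automorphism of μ satisfying A·D(a,b)·A⁻¹ = D(b,a). -/
import Mathlib


open Matrix

/-- The bracket on ℝ⁶ given by μ(e₁,e₂) = −e₃ + √3·e₄, μ(e₁,e₄) = 2e₅,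
μ(e₂,e₄) = e₆, μ(e₂,e₃) = −√3·e₆ (bilinear extension); this is the nilsoliton
μ₂₀ = (0,0,−12,√3·12,2·14,24−√3·23). -/
noncomputable def mu20 (x y : Fin 6 → ℝ) : Fin 6 → ℝ :=
  ![0, 0, -(x 0 * y 1 - x 1 * y 0),
    Real.sqrt 3 * (x 0 * y 1 - x 1 * y 0),
    2 * (x 0 * y 3 - x 3 * y 0),
    (x 1 * y 3 - x 3 * y 1) - Real.sqrt 3 * (x 1 * y 2 - x 2 * y 1)]

/-- `D` is a derivation of the bracket `mu20`. -/
def IsDerivMu20 (D : Matrix (Fin 6) (Fin 6) ℝ) : Prop :=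
  ∀ x y : Fin 6 → ℝ, D.mulVec (mu20 x y) = mu20 (D.mulVec x) y + mu20 x (D.mulVec y)

/-- `g` is an automorphism of the bracket `mu20`. -/
def IsAutoMu20 (g : Matrix (Fin 6) (Fin 6) ℝ) : Prop :=
  IsUnit g ∧ ∀ x y : Fin 6 → ℝ, g.mulVec (mu20 x y) = mu20 (g.mulVec x) (g.mulVec y)

/-- D(a,b) = diag(a,b,a+b,a+b,2a+b,a+2b). -/
def D20 (a b : ℝ) : Matrix (Fin 6) (Fin 6) ℝ :=
  Matrix.diagonal ![a, b, a + b, a + b, 2 * a + b, a + 2 * b]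

/-- A = diag([[0,1],[1,0]], [[1/2,√3/2],[√3/2,−1/2]], [[0,−1],[−1,0]]). -/
noncomputable def A20 : Matrix (Fin 6) (Fin 6) ℝ :=
  !![0, 1, 0, 0, 0, 0;
     1, 0, 0, 0, 0, 0;
     0, 0, 1 / 2, Real.sqrt 3 / 2, 0, 0;
     0, 0, Real.sqrt 3 / 2, -(1 / 2), 0, 0;
     0, 0, 0, 0, 0, -1;
     0, 0, 0, 0, -1, 0]

@[simp] lemma cv2' {α : Type*} (a : α) (u : Fin 5 → α) : Matrix.vecCons a u 2 = u 1 := rfl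
@[simp] lemma cv3' {α : Type*} (a : α) (u : Fin 5 → α) : Matrix.vecCons a u 3 = u 2 := rfl
@[simp] lemma cv4' {α : Type*} (a : α) (u : Fin 5 → α) : Matrix.vecCons a u 4 = u 3 := rfl
@[simp] lemma cons_val_five' {α : Type*} (a : α) (u : Fin 5 → α) :
    Matrix.vecCons a u 5 = u 4 := rfl

lemma s3 : Real.sqrt 3 * Real.sqrt 3 = 3 := Real.mul_self_sqrt (by norm_num)

lemma hAT : A20ᵀ = !![0, 1, 0, 0, 0, 0;
     1, 0, 0, 0, 0, 0;
     0, 0, 1 / 2, Real.sqrt 3 / 2, 0, 0;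
     0, 0, Real.sqrt 3 / 2, -(1 / 2), 0, 0;
     0, 0, 0, 0, 0, -1;
     0, 0, 0, 0, -1, 0] := by
  ext i j
  fin_cases i <;> fin_cases j <;> rfl

lemma hAAT : A20 * A20ᵀ = 1 := by
  rw [hAT]
  ext i j
  fin_cases i <;> fin_cases j <;>
    simp [A20, Matrix.mul_apply, Fin.sum_univ_six, cv2', cv3', cv4', cons_val_five', Matrix.vecHead, Matrix.vecTail, Matrix.one_apply] <;>
    nlinarith [s3]


set_option maxHeartbeats 2000000 in
theorem stmt12 :
    (∀ a b : ℝ, (D20 a b).IsSymm ∧ IsDerivMu20 (D20 a b)) ∧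
    A20 * A20ᵀ = 1 ∧ IsAutoMu20 A20 ∧
    (∀ a b : ℝ, A20 * D20 a b * A20⁻¹ = D20 b a) := by
  have hinv : A20⁻¹ = A20ᵀ := inv_eq_right_inv hAAT
  refine ⟨fun a b => ⟨?_, ?_⟩, hAAT, ⟨?_, ?_⟩, fun a b => ?_⟩
  · exact (Matrix.isSymm_diagonal _)
  · intro x y
    funext i
    fin_cases i <;>
      simp [D20, mu20, Matrix.mulVec, dotProduct, Fin.sum_univ_six, cv2', cv3', cv4', cons_val_five', Matrix.vecHead, Matrix.vecTail, Matrix.diagonal] <;> ring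
  · exact ⟨⟨A20, A20ᵀ, hAAT, mul_eq_one_comm.mp hAAT⟩, rfl⟩
  · intro x y
    funext i
    fin_cases i <;>
      simp [A20, mu20, Matrix.mulVec, dotProduct, Fin.sum_univ_six, cv2', cv3', cv4', cons_val_five', Matrix.vecHead, Matrix.vecTail] <;> (try ring_nf) <;> (try rw [Real.sq_sqrt (by norm_num : (0:ℝ) ≤ 3)]) <;> ring_nf <;> nlinarith [s3]
  · have key : A20 * D20 a b = D20 b a * A20 := by
      ext i j
      fin_cases i <;> fin_cases j <;>
        simp [A20, D20, Matrix.mul_diagonal, Matrix.diagonal_mul, Matrix.vecHead, Matrix.vecTail] <;> ring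
    rw [hinv, Matrix.mul_assoc] at *
    rw [← Matrix.mul_assoc, key, Matrix.mul_assoc, hAAT, Matrix.mul_one]
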